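/- Let L be a natural number, let A₀, …, A_{L−1} be real C × C skew-symmetric matrices, let α and M ≥ 0 be real numbers with ‖A_l‖₂ ≤ M for all l, and let z₀ ∈ ℝ^C. Define z_{l+1} = (I + α A_l) z_l for l = 0, …, L−1. Then ‖z_L‖₂ ≤ exp((L/2) α² M²) · ‖z₀‖₂. -/

import Mathlib

open Matrix

/-- The operator norm of a real square matrix induced by the Euclidean norm. -/
noncomputable def opNorm2 {C : ℕ} (A : Matrix (Fin C) (Fin C) ℝ) : ℝ :=
  ‖Matrix.toEuclideanCLM (𝕜 := ℝ) A‖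

/-!
Skew-symmetry makes `A z` orthogonal to `z`, so by Pythagoras one layer multiplies `‖z‖²` by at
most `1 + α²M² ≤ exp (α²M²)`: the first-order term in `α` cancels, and only `α²` accumulates
over the `L` layers.
-/

open scoped RealInnerProductSpace

theorem Matrix.dotProduct_mulVec_self_eq_zero {n R : Type*} [Fintype n] [CommRing R]
    [NoZeroDivisors R] [CharZero R] {B : Matrix n n R} (hB : Bᵀ = -B) (v : n → R) :
    v ⬝ᵥ B *ᵥ v = 0 :=
  CharZero.eq_neg_self_iff.mp <| calc
    v ⬝ᵥ B *ᵥ v = Bᵀ *ᵥ v ⬝ᵥ v := by rw [dotProduct_mulVec, mulVec_transpose]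
    _ = -(v ⬝ᵥ B *ᵥ v) := by rw [hB, neg_mulVec, neg_dotProduct, dotProduct_comm]

theorem Matrix.inner_toEuclideanCLM_self_eq_zero {n : Type*} [Fintype n] [DecidableEq n]
    {B : Matrix n n ℝ} (hB : Bᵀ = -B) (v : EuclideanSpace ℝ n) :
    ⟪v, toEuclideanCLM (𝕜 := ℝ) B v⟫ = 0 := by
  rw [inner_toEuclideanCLM, dotProduct_mulVec_self_eq_zero hB]

theorem Matrix.toLp_one_add_smul_mulVec {n : Type*} [Fintype n] [DecidableEq n]
    (B : Matrix n n ℝ) (α : ℝ) (v : EuclideanSpace ℝ n) :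
    WithLp.toLp 2 ((1 + α • B) *ᵥ v) = v + α • toEuclideanCLM (𝕜 := ℝ) B v := by
  ext i
  simp [add_mulVec, smul_mulVec]

theorem norm_add_smul_le_exp_mul {E : Type*} [NormedAddCommGroup E] [InnerProductSpace ℝ E]
    {v u : E} {K : ℝ} (α : ℝ) (horth : ⟪v, u⟫ = 0) (hu : ‖u‖ ≤ K * ‖v‖) :
    ‖v + α • u‖ ≤ Real.exp (α ^ 2 * K ^ 2 / 2) * ‖v‖ := by
  have hu_sq : ‖u‖ ^ 2 ≤ K ^ 2 * ‖v‖ ^ 2 := by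
    rw [← mul_pow]; exact pow_le_pow_left₀ (norm_nonneg u) hu 2
  have pythagoras : ‖v + α • u‖ ^ 2 = ‖v‖ ^ 2 + α ^ 2 * ‖u‖ ^ 2 := by
    rw [norm_add_sq_real, inner_smul_right, horth, norm_smul, Real.norm_eq_abs, mul_pow, sq_abs]
    ring
  refine le_of_sq_le_sq ?_ (by positivity)
  calc ‖v + α • u‖ ^ 2 ≤ (1 + α ^ 2 * K ^ 2) * ‖v‖ ^ 2 := by
        rw [pythagoras]; nlinarith [sq_nonneg α]
    _ ≤ Real.exp (α ^ 2 * K ^ 2) * ‖v‖ ^ 2 := by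
        gcongr; linarith [Real.add_one_le_exp (α ^ 2 * K ^ 2)]
    _ = (Real.exp (α ^ 2 * K ^ 2 / 2) * ‖v‖) ^ 2 := by
        rw [mul_pow, ← Real.exp_nat_mul]; ring_nf

theorem exponential_multi_layer_growth_bound_general (C L : ℕ) (A : ℕ → Matrix (Fin C) (Fin C) ℝ)
    (hA : ∀ l, (A l)ᵀ = -(A l)) (α M : ℝ)
    (hAM : ∀ l, opNorm2 (A l) ≤ M) (z : ℕ → EuclideanSpace ℝ (Fin C))
    (hz : ∀ l < L, z (l + 1)
      = (WithLp.toLp 2 (((1 : Matrix (Fin C) (Fin C) ℝ) + α • A l).mulVec (z l) : Fin C → ℝ) :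
          EuclideanSpace ℝ (Fin C))) :
    ‖z L‖ ≤ Real.exp ((L : ℝ) / 2 * α ^ 2 * M ^ 2) * ‖z 0‖ := by
  have step : ∀ l < L, ‖z (l + 1)‖ ≤ Real.exp (α ^ 2 * M ^ 2 / 2) * ‖z l‖ := fun l hl => by
    rw [hz l hl, toLp_one_add_smul_mulVec]
    exact norm_add_smul_le_exp_mul α (inner_toEuclideanCLM_self_eq_zero (hA l) _)
      ((toEuclideanCLM (𝕜 := ℝ) (A l)).le_of_opNorm_le (hAM l) _)
  calc ‖z L‖ ≤ Real.exp (α ^ 2 * M ^ 2 / 2) ^ L * ‖z 0‖ :=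
        le_geom (u := fun l => ‖z l‖) (Real.exp_nonneg _) L step
    _ = Real.exp ((L : ℝ) / 2 * α ^ 2 * M ^ 2) * ‖z 0‖ := by rw [← Real.exp_nat_mul]; ring_nf

/-- Exponential multi-layer growth bound: for skew-symmetric generators `A_l` with
`‖A_l‖₂ ≤ M` and updates `z_{l+1} = (I + α A_l) z_l`, one has
`‖z_L‖₂ ≤ exp((L/2) α² M²) · ‖z₀‖₂`. -/
theorem exponential_multi_layer_growth_bound (C L : ℕ) (A : ℕ → Matrix (Fin C) (Fin C) ℝ)
    (hA : ∀ l, (A l)ᵀ = -(A l)) (α M : ℝ) (hM : 0 ≤ M)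
    (hAM : ∀ l, opNorm2 (A l) ≤ M) (z : ℕ → EuclideanSpace ℝ (Fin C))
    (hz : ∀ l < L, z (l + 1)
      = (WithLp.toLp 2 (((1 : Matrix (Fin C) (Fin C) ℝ) + α • A l).mulVec (z l) : Fin C → ℝ) :
          EuclideanSpace ℝ (Fin C))) :
    ‖z L‖ ≤ Real.exp ((L : ℝ) / 2 * α ^ 2 * M ^ 2) * ‖z 0‖ :=
  exponential_multi_layer_growth_bound_general C L A hA α M hAM z hz
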